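/- arXiv:1503.06895 — 2 statements merged into one kernel-verified Lean document; each statement's English description precedes it below -/
import Mathlib

section
/- The map F is not Li-Yorke chaotic. -/
/-- `{x, y}` is a Li-Yorke chaotic pair for `T` if the distances between the iterates
`Tⁿ x` and `Tⁿ y` have positive limsup and zero liminf. -/
def LiYorkePair {X : Type*} [PseudoEMetricSpace X] (T : X → X) (x y : X) : Prop :=
  0 < Filter.limsup (fun n : ℕ => edist (T^[n] x) (T^[n] y)) Filter.atTop ∧
    Filter.liminf (fun n : ℕ => edist (T^[n] x) (T^[n] y)) Filter.atTop = 0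

/-- `T` is Li-Yorke chaotic if there is an uncountable set all of whose pairs of distinct
points are Li-Yorke chaotic pairs for `T`. -/
def LiYorkeChaotic {X : Type*} [PseudoEMetricSpace X] (T : X → X) : Prop :=
  ∃ Γ : Set X, ¬ Γ.Countable ∧ ∀ x ∈ Γ, ∀ y ∈ Γ, x ≠ y → LiYorkePair T x y

/-- The open unit disk in `ℂ`. -/
def unitDisk : Set ℂ := {z : ℂ | ‖z‖ < 1}

/-- The map `f` on the open unit disk. -/
noncomputable def mapF (z : ℂ) : ℂ :=
  if z = 0 then 0 else
    (Real.exp 1 * z / (Real.exp 1 * ‖z‖ - ‖z‖ + 1)) *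
      Complex.exp (2 * Real.pi * Complex.I *
        Real.log (‖z‖ / (1 - ‖z‖)))

/-- The map `F`, the inverse of `f`, on the open unit disk. -/
noncomputable def mapFinv (w : ℂ) : ℂ :=
  if w = 0 then 0 else
    ((Real.exp 1)⁻¹ * w / ((Real.exp 1)⁻¹ * ‖w‖ - ‖w‖ + 1)) *
      Complex.exp (-(2 * Real.pi * Complex.I *
        Real.log (‖w‖ / (1 - ‖w‖))))

/-!
Writing `s(r) = r / (1 - r)`, the map `F` multiplies `s(‖w‖)` by exactly `e⁻¹`, so
`‖Fⁿ w‖ ≤ s(‖Fⁿ w‖) = e⁻ⁿ s(‖w‖) → 0` and every orbit in the disk converges to `0`.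
Two orbits converging to the same point have distance tending to `0`, so no pair of points
of the disk has positive limsup distance.
-/

open Filter Topology

theorem not_liYorkePair_of_tendsto {X : Type*} [PseudoEMetricSpace X] {T : X → X} {x y a : X}
    (hx : Tendsto (fun n => T^[n] x) atTop (𝓝 a)) (hy : Tendsto (fun n => T^[n] y) atTop (𝓝 a)) :
    ¬ LiYorkePair T x y := by
  rintro ⟨hpos, -⟩
  have hdist : Tendsto (fun n => edist (T^[n] x) (T^[n] y)) atTop (𝓝 0) := by
    simpa using hx.edist hy
  exact hpos.ne' hdist.limsup_eq

theorem not_exists_liYorke_scrambled_of_tendsto {X : Type*} [PseudoEMetricSpace X]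
    {T : X → X} {S : Set X} {a : X} (h : ∀ x ∈ S, Tendsto (fun n => T^[n] x) atTop (𝓝 a)) :
    ¬ ∃ Γ : Set X, Γ ⊆ S ∧ ¬ Γ.Countable ∧ ∀ x ∈ Γ, ∀ y ∈ Γ, x ≠ y → LiYorkePair T x y := by
  rintro ⟨Γ, hΓS, hΓ, hpair⟩
  obtain ⟨x, hx, y, hy, hxy⟩ : Γ.Nontrivial :=
    Set.not_subsingleton_iff.mp fun hs => hΓ hs.countable
  exact not_liYorkePair_of_tendsto (h x (hΓS hx)) (h y (hΓS hy)) (hpair x hx y hy hxy)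

section Mobius

variable {c r : ℝ}

theorem mobius_denom_pos (hc : 0 < c) (h0 : 0 ≤ r) (h1 : r < 1) : 0 < c * r - r + 1 := by
  nlinarith

theorem mobius_lt_one (hc : 0 < c) (h0 : 0 ≤ r) (h1 : r < 1) :
    c * r / (c * r - r + 1) < 1 := by
  rw [div_lt_one (mobius_denom_pos hc h0 h1)]
  linarith

theorem mobius_div_one_sub (hc : 0 < c) (h0 : 0 ≤ r) (h1 : r < 1) :
    c * r / (c * r - r + 1) / (1 - c * r / (c * r - r + 1)) = c * (r / (1 - r)) := by
  have hd := (mobius_denom_pos hc h0 h1).ne'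
  have hsub : 1 - c * r / (c * r - r + 1) = (1 - r) / (c * r - r + 1) := by
    rw [eq_div_iff hd, sub_mul, div_mul_cancel₀ _ hd]
    ring
  rw [hsub, div_div_div_cancel_right₀ hd, mul_div_assoc]

end Mobius

theorem norm_mapFinv {w : ℂ} (hw : ‖w‖ < 1) :
    ‖mapFinv w‖ = (Real.exp 1)⁻¹ * ‖w‖ / ((Real.exp 1)⁻¹ * ‖w‖ - ‖w‖ + 1) := by
  rcases eq_or_ne w 0 with rfl | hw0
  · simp [mapFinv]
  have hd := mobius_denom_pos (inv_pos.2 (Real.exp_pos 1)) (norm_nonneg w) hw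
  have hrot : ‖Complex.exp (-(2 * Real.pi * Complex.I * Real.log (‖w‖ / (1 - ‖w‖))))‖ = 1 := by
    rw [Complex.norm_exp]
    simp
  have hden : (((Real.exp 1)⁻¹ : ℝ) : ℂ) * ‖w‖ - ‖w‖ + 1 =
      (((Real.exp 1)⁻¹ * ‖w‖ - ‖w‖ + 1 : ℝ) : ℂ) := by
    push_cast
    ring
  rw [mapFinv, if_neg hw0, norm_mul, hrot, mul_one, hden, norm_div, norm_mul, Complex.norm_real,
    Complex.norm_real, Real.norm_of_nonneg (inv_pos.2 (Real.exp_pos 1)).le,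
    Real.norm_of_nonneg hd.le]

theorem norm_iterate_mapFinv {w : ℂ} (hw : ‖w‖ < 1) (n : ℕ) :
    ‖mapFinv^[n] w‖ < 1 ∧
      ‖mapFinv^[n] w‖ / (1 - ‖mapFinv^[n] w‖) = (Real.exp 1)⁻¹ ^ n * (‖w‖ / (1 - ‖w‖)) := by
  induction n with
  | zero => simpa using hw
  | succ n ih =>
    obtain ⟨hlt, hodds⟩ := ih
    have hc : 0 < (Real.exp 1)⁻¹ := inv_pos.2 (Real.exp_pos 1)
    rw [Function.iterate_succ_apply', norm_mapFinv hlt,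
      mobius_div_one_sub hc (norm_nonneg _) hlt, hodds, pow_succ, mul_comm _ (Real.exp 1)⁻¹,
      mul_assoc]
    exact ⟨mobius_lt_one hc (norm_nonneg _) hlt, rfl⟩

theorem tendsto_iterate_mapFinv {w : ℂ} (hw : ‖w‖ < 1) :
    Tendsto (fun n => mapFinv^[n] w) atTop (𝓝 0) := by
  rw [tendsto_zero_iff_norm_tendsto_zero]
  have hbound (n : ℕ) : ‖mapFinv^[n] w‖ ≤ (Real.exp 1)⁻¹ ^ n * (‖w‖ / (1 - ‖w‖)) := by
    obtain ⟨hlt, hodds⟩ := norm_iterate_mapFinv hw n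
    rw [← hodds]
    exact le_div_self (norm_nonneg _) (by linarith) (by linarith [norm_nonneg (mapFinv^[n] w)])
  have hgeom : Tendsto (fun n : ℕ => (Real.exp 1)⁻¹ ^ n * (‖w‖ / (1 - ‖w‖))) atTop (𝓝 0) := by
    have hlt : (Real.exp 1)⁻¹ < 1 := inv_lt_one_of_one_lt₀ (Real.one_lt_exp_iff.2 one_pos)
    simpa using (tendsto_pow_atTop_nhds_zero_of_lt_one (inv_pos.2 (Real.exp_pos 1)).le
      hlt).mul_const (‖w‖ / (1 - ‖w‖))
  exact squeeze_zero (fun n => norm_nonneg _) hbound hgeom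

/-- The map `F` of the open unit disk is not Li-Yorke chaotic. -/
theorem stmt_15 :
    ¬ ∃ Γ : Set ℂ, Γ ⊆ unitDisk ∧ ¬ Γ.Countable ∧
      ∀ x ∈ Γ, ∀ y ∈ Γ, x ≠ y → LiYorkePair mapFinv x y :=
  not_exists_liYorke_scrambled_of_tendsto fun _ hw => tendsto_iterate_mapFinv hw
end

section
/- Let x, y ∈ (0,1) be real numbers (viewed as points of 𝔻) such that ln(x/(1−x)) − ln(y/(1−y)) is irrational. Then limsup_{n→∞} |fⁿ(x) − fⁿ(y)| = 2; in particular {x,y} is a Li-Yorke chaotic pair for f. -/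
/-!
Write points of the punctured disk as `σ(t) · e^{2πiθ}` with `σ` the logistic function, so that
`t = ln(|z|/(1-|z|))` and `θ ∈ ℝ/ℤ`. In these coordinates `f` is `(t, θ) ↦ (t + 1, θ + t)`, hence
along the orbits of `x` and `y` both radii tend to `1` while the angles differ by `n • (s - t)`,
where `s`, `t` are the logits of `x`, `y`. For irrational `s - t` every point `c` of `ℝ/ℤ` is a
cluster point of these multiples, so every `|e^{2πic} - 1|` is a cluster point of
`|fⁿx - fⁿy| ≤ 2`; `c = 1/2` and `c = 0` give the limsup `2` and the liminf `0`.
-/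

open Real Filter Topology

lemma exp_one_mul_sigmoid_div (t : ℝ) :
    exp 1 * sigmoid t / (exp 1 * sigmoid t - sigmoid t + 1) = sigmoid (t + 1) := by
  have : exp 1 + exp (-t) ≠ 0 := by positivity
  rw [sigmoid_def, sigmoid_def, neg_add, exp_add, exp_neg 1]
  field_simp
  rw [div_eq_one_iff_eq (by ring_nf; exact this)]
  ring

lemma sigmoid_div_one_sub_sigmoid (t : ℝ) : sigmoid t / (1 - sigmoid t) = exp t := by
  rw [← sigmoid_neg, ← sigmoid_mul_rexp_neg, div_mul_cancel_left₀ (sigmoid_pos t).ne', exp_neg,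
    inv_inv]

lemma sigmoid_log_div_one_sub {x : ℝ} (hx : x ∈ Set.Ioo 0 1) :
    sigmoid (log (x / (1 - x))) = x := by
  obtain ⟨hx0, hx1⟩ := hx
  rw [sigmoid_def, ← log_inv, exp_log (by bound)]
  field_simp
  ring

noncomputable def logitPolar (t : ℝ) (θ : UnitAddCircle) : ℂ := sigmoid t * θ.toCircle

lemma norm_logitPolar (t : ℝ) (θ : UnitAddCircle) : ‖logitPolar t θ‖ = sigmoid t := by
  rw [logitPolar, norm_mul, Circle.norm_coe, mul_one, Complex.norm_real, Real.norm_eq_abs,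
    abs_of_pos (sigmoid_pos t)]

lemma logitPolar_ne_zero (t : ℝ) (θ : UnitAddCircle) : logitPolar t θ ≠ 0 := by
  rw [← norm_ne_zero_iff, norm_logitPolar]
  exact (sigmoid_pos t).ne'

lemma mapF_logitPolar (t : ℝ) (θ : UnitAddCircle) :
    mapF (logitPolar t θ) = logitPolar (t + 1) (θ + t) := by
  rw [mapF, if_neg (logitPolar_ne_zero t θ), norm_logitPolar, sigmoid_div_one_sub_sigmoid, log_exp,
    logitPolar, logitPolar, ← exp_one_mul_sigmoid_div, AddCircle.toCircle_add,
    AddCircle.toCircle_apply_mk, Circle.coe_mul, Circle.coe_exp]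
  push_cast
  field_simp

lemma iterate_mapF_logitPolar (t : ℝ) (θ : UnitAddCircle) (n : ℕ) :
    mapF^[n] (logitPolar t θ) =
      logitPolar (t + n) (θ + ∑ k ∈ Finset.range n, ((t + k : ℝ) : UnitAddCircle)) := by
  induction n with
  | zero => simp
  | succ n ih =>
    rw [Function.iterate_succ_apply', ih, mapF_logitPolar, Finset.sum_range_succ, Nat.cast_succ,
      add_assoc t, add_assoc θ]

lemma norm_logitPolar_sub_logitPolar (s t : ℝ) (α β : UnitAddCircle) :
    ‖logitPolar s α - logitPolar t β‖ = ‖(sigmoid s : ℂ) * (α - β).toCircle - sigmoid t‖ := by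
  have : logitPolar s α - logitPolar t β =
      β.toCircle * ((sigmoid s : ℂ) * (α - β).toCircle - sigmoid t) := by
    rw [logitPolar, logitPolar, ← sub_add_cancel α β, AddCircle.toCircle_add, add_sub_cancel_right,
      Circle.coe_mul]
    ring
  rw [this, norm_mul, Circle.norm_coe, one_mul]

lemma norm_logitPolar_sub_logitPolar_le (s t : ℝ) (α β : UnitAddCircle) :
    ‖logitPolar s α - logitPolar t β‖ ≤ 2 := by
  calc ‖logitPolar s α - logitPolar t β‖ ≤ ‖logitPolar s α‖ + ‖logitPolar t β‖ := norm_sub_le _ _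
    _ ≤ 2 := by
      rw [norm_logitPolar, norm_logitPolar]
      linarith [sigmoid_le_one s, sigmoid_le_one t]

lemma mapClusterPt_atTop_nsmul_of_irrational {δ : ℝ} (hδ : Irrational δ) (c : UnitAddCircle) :
    MapClusterPt c atTop (fun n : ℕ ↦ n • (δ : UnitAddCircle)) := by
  have hdense : DenseRange (· • (δ : UnitAddCircle) : ℤ → UnitAddCircle) :=
    AddCircle.denseRange_zsmul_coe_iff.2 (by rwa [div_one])
  exact ((mapClusterPt_atTop_nsmul_tfae c _).out 0 3).2 (hdense.closure_range ▸ Set.mem_univ c)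

lemma MapClusterPt.prodMk_of_tendsto {ι X Y : Type*} [TopologicalSpace X] [TopologicalSpace Y]
    {F : Filter ι} {u : ι → X} {v : ι → Y} {x : X} {y : Y} (hu : MapClusterPt x F u)
    (hv : Tendsto v F (𝓝 y)) : MapClusterPt (x, y) F (fun i ↦ (u i, v i)) := by
  rw [mapClusterPt_iff_frequently]
  intro s hs
  obtain ⟨U, hU, V, hV, hUV⟩ := mem_nhds_prod_iff.1 hs
  exact ((hu.frequently hU).and_eventually (hv hV)).mono fun i hi ↦ hUV hi

lemma liYorkePair_of_mapClusterPt {X : Type*} [PseudoMetricSpace X] {T : X → X} {x y : X}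
    {a : ℝ} (ha : 0 < a) (hpos : MapClusterPt a atTop (fun n ↦ dist (T^[n] x) (T^[n] y)))
    (hzero : MapClusterPt 0 atTop (fun n ↦ dist (T^[n] x) (T^[n] y))) :
    LiYorkePair T x y := by
  have hofReal {b : ℝ} (hb : MapClusterPt b atTop (fun n ↦ dist (T^[n] x) (T^[n] y))) :
      MapClusterPt (ENNReal.ofReal b) atTop (fun n ↦ edist (T^[n] x) (T^[n] y)) := by
    simp only [edist_dist]
    exact hb.continuousAt_comp ENNReal.continuous_ofReal.continuousAt
  refine ⟨(ENNReal.ofReal_pos.2 ha).trans_le (hofReal hpos).le_limsup, ?_⟩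
  exact le_antisymm ((hofReal hzero).liminf_le.trans_eq ENNReal.ofReal_zero) bot_le

lemma sum_range_coe_add_natCast (s t : ℝ) (n : ℕ) :
    ∑ k ∈ Finset.range n, ((s + k : ℝ) : UnitAddCircle) =
      ∑ k ∈ Finset.range n, ((t + k : ℝ) : UnitAddCircle) + n • ((s - t : ℝ) : UnitAddCircle) := by
  simp only [AddCircle.coe_add, AddCircle.coe_sub, Finset.sum_add_distrib, Finset.sum_const,
    Finset.card_range, smul_sub]
  abel

lemma mapClusterPt_norm_iterate_mapF_sub {s t : ℝ} (hst : Irrational (s - t))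
    (α β c : UnitAddCircle) :
    MapClusterPt ‖(c.toCircle : ℂ) - 1‖ atTop
      (fun n : ℕ ↦ ‖mapF^[n] (logitPolar s α) - mapF^[n] (logitPolar t β)‖) := by
  set G : UnitAddCircle × ℝ × ℝ → ℝ := fun p ↦ ‖(p.2.1 : ℂ) * p.1.toCircle - p.2.2‖
  have hG : Continuous G := by
    have := AddCircle.continuous_toCircle (T := 1)
    fun_prop
  have horbit (n : ℕ) : ‖mapF^[n] (logitPolar s α) - mapF^[n] (logitPolar t β)‖ =
      ‖(sigmoid (s + n) : ℂ) * (α - β + n • ((s - t : ℝ) : UnitAddCircle)).toCircle -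
        sigmoid (t + n)‖ := by
    rw [iterate_mapF_logitPolar, iterate_mapF_logitPolar, norm_logitPolar_sub_logitPolar,
      sum_range_coe_add_natCast s t]
    congr 5
    abel
  have hangle : MapClusterPt c atTop (fun n : ℕ ↦ α - β + n • ((s - t : ℝ) : UnitAddCircle)) := by
    simpa [Function.comp_def] using
      (mapClusterPt_atTop_nsmul_of_irrational hst (c - (α - β))).continuousAt_comp
        (continuous_const_add (α - β)).continuousAt
  have hradii (r : ℝ) : Tendsto (fun n : ℕ ↦ sigmoid (r + n)) atTop (𝓝 1) :=
    tendsto_sigmoid_atTop.comp (tendsto_atTop_add_const_left _ r tendsto_natCast_atTop_atTop)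
  simpa [Function.comp_def, horbit, G] using
    (hangle.prodMk_of_tendsto ((hradii s).prodMk_nhds (hradii t))).continuousAt_comp
      hG.continuousAt

lemma toCircle_half_eq_neg_one : (AddCircle.toCircle ((1 / 2 : ℝ) : UnitAddCircle) : ℂ) = -1 := by
  rw [AddCircle.toCircle_apply_mk, Circle.coe_exp, ← Complex.exp_pi_mul_I]
  push_cast
  ring_nf

/-- For `x, y ∈ (0,1)` with `ln(x/(1-x)) - ln(y/(1-y))` irrational, the distances between the
iterates of `f` at `x` and `y` have limsup `2`; in particular `{x, y}` is a Li-Yorke chaotic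
pair for `f`. -/
theorem stmt_17 (x y : ℝ) (hx : x ∈ Set.Ioo (0 : ℝ) 1) (hy : y ∈ Set.Ioo (0 : ℝ) 1)
    (hirr : Irrational (Real.log (x / (1 - x)) - Real.log (y / (1 - y)))) :
    Filter.limsup (fun n : ℕ => ‖mapF^[n] (x : ℂ) - mapF^[n] (y : ℂ)‖)
        Filter.atTop = 2 ∧
      LiYorkePair mapF (x : ℂ) (y : ℂ) := by
  have hx' : (x : ℂ) = logitPolar (Real.log (x / (1 - x))) 0 := by
    simp [logitPolar, sigmoid_log_div_one_sub hx]
  have hy' : (y : ℂ) = logitPolar (Real.log (y / (1 - y))) 0 := by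
    simp [logitPolar, sigmoid_log_div_one_sub hy]
  have hcluster := mapClusterPt_norm_iterate_mapF_sub hirr 0 0
  have hle (n : ℕ) : ‖mapF^[n] (x : ℂ) - mapF^[n] (y : ℂ)‖ ≤ 2 := by
    rw [hx', hy', iterate_mapF_logitPolar, iterate_mapF_logitPolar]
    exact norm_logitPolar_sub_logitPolar_le ..
  rw [← hx', ← hy'] at hcluster
  have htwo : MapClusterPt 2 atTop (fun n ↦ ‖mapF^[n] (x : ℂ) - mapF^[n] (y : ℂ)‖) := by
    have := hcluster ((1 / 2 : ℝ) : UnitAddCircle)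
    rwa [toCircle_half_eq_neg_one, show (-1 - 1 : ℂ) = -2 by norm_num, norm_neg, Complex.norm_two]
      at this
  have hzero : MapClusterPt 0 atTop (fun n ↦ ‖mapF^[n] (x : ℂ) - mapF^[n] (y : ℂ)‖) := by
    simpa using hcluster 0
  simp only [← dist_eq_norm] at hle htwo hzero ⊢
  refine ⟨le_antisymm ?_ (htwo.le_limsup (isBoundedUnder_of ⟨2, hle⟩)),
    liYorkePair_of_mapClusterPt two_pos htwo hzero⟩
  exact limsup_le_of_le (isCoboundedUnder_le_of_le atTop fun n ↦ dist_nonneg) (.of_forall hle)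
end
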